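/- arXiv:math/0606020 — 3 statements merged into one kernel-verified Lean document; each statement's English description precedes it below -/
import Mathlib

section
/- Let (W,S) be a right-angled Coxeter system, let w ∈ W with reduced representation w = s₁⋯s_l (each s_i ∈ S, ℓ(w) = l), and let t, t' ∈ S. If the representation t s₁⋯s_l of tw is reduced (i.e., ℓ(tw) = l + 1) and t w t' = w, then t = t' and t s_i = s_i t for each i ∈ {1, …, l}. -/
/-!
Sending `s c` to `-1` and every other generator to `1` is a homomorphism `W → ℤˣ` when `W` is
right-angled; applied to `t w t' = w` it gives `t = t'`, so `t` commutes with `w`. Letters of `ω`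
commuting with `t` can be stripped from the front, keeping `t :: ω` reduced and `t` commuting with
the rest. If the next letter `u` does not commute with `t`, then `m(t, u) = ∞` and `t u ⋯` has both
`t` and `u` as left descents. That is impossible: Tits' sign action of `W` on `W × ZMod 2` yields
the exchange condition, and exchanging repeatedly produces reduced expressions of a fixed element
ending in arbitrarily long alternating words in `t, u`. Alternating words are reduced because `W`
retracts onto the infinite dihedral group `⟨t, u⟩`, acting on `ℤ` by the reflections in `-1/2` and
`1/2`: each letter moves `0` by at most one step, and an alternating word always moves it outwards.
-/

namespace CoxeterMatrix

variable {B : Type*}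

def IsRightAngled (M : CoxeterMatrix B) : Prop :=
  ∀ i j : B, i ≠ j → M i j = 2 ∨ M i j = 0

theorem IsRightAngled.isLiftable {M : CoxeterMatrix B} (hM : M.IsRightAngled) {G : Type*}
    [Monoid G] {f : B → G} (hsq : ∀ i, f i * f i = 1)
    (hcomm : ∀ i j, M i j = 2 → Commute (f i) (f j)) : M.IsLiftable f := by
  intro i j
  rcases eq_or_ne i j with rfl | hij
  · rw [M.diagonal, pow_one, hsq]
  rcases hM i j hij with h | h
  · rw [h, sq, (hcomm i j h).symm.mul_mul_mul_comm, hsq, hsq, one_mul]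
  · rw [h, pow_zero]

end CoxeterMatrix

namespace CoxeterSystem

variable {B W : Type*} [Group W] {M : CoxeterMatrix B} (cs : CoxeterSystem M W)

theorem commute_simple_of_eq_two {i j : B} (h : M i j = 2) :
    Commute (cs.simple i) (cs.simple j) := by
  have hsq := cs.simple_mul_simple_pow i j
  rw [h, sq] at hsq
  calc cs.simple i * cs.simple j = (cs.simple i * cs.simple j)⁻¹ := eq_inv_of_mul_eq_one_left hsq
    _ = cs.simple j * cs.simple i := by rw [mul_inv_rev, inv_simple, inv_simple]

theorem _root_.CoxeterMatrix.IsRightAngled.eq_zero_of_not_commute (hM : M.IsRightAngled)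
    {i j : B} (h : ¬Commute (cs.simple i) (cs.simple j)) : M i j = 0 := by
  have hij : i ≠ j := by rintro rfl; exact h (Commute.refl _)
  exact (hM i j hij).resolve_left fun h2 ↦ h (cs.commute_simple_of_eq_two h2)

section Parity

variable [DecidableEq B]

def letterParity (hM : M.IsRightAngled) (c : B) : W →* ℤˣ :=
  cs.lift ⟨fun i ↦ if i = c then -1 else 1,
    hM.isLiftable (fun i ↦ by split_ifs <;> simp) fun _ _ _ ↦ Commute.all _ _⟩

theorem letterParity_simple (hM : M.IsRightAngled) (c i : B) :
    cs.letterParity hM c (cs.simple i) = if i = c then -1 else 1 :=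
  cs.lift_apply_simple _ i

end Parity

theorem eq_of_simple_mul_mul_simple_eq (hM : M.IsRightAngled) {t t' : B} {w : W}
    (h : cs.simple t * w * cs.simple t' = w) : t = t' := by
  classical
  by_contra hne
  have := congrArg (cs.letterParity hM t) h
  simp [letterParity_simple, Ne.symm hne] at this

theorem simple_mul_mul_simple_eq_iff (i : B) (x y : W) :
    cs.simple i * x * cs.simple i = y ↔ x = cs.simple i * y * cs.simple i := by
  constructor <;> rintro rfl <;> simp [mul_assoc]

section Tits

variable [DecidableEq W]

def titsAction (i : B) : Function.End (W × ZMod 2) :=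
  fun p ↦ (cs.simple i * p.1 * cs.simple i, p.2 + if p.1 = cs.simple i then 1 else 0)

theorem titsAction_mul_self (i : B) : cs.titsAction i * cs.titsAction i = 1 := by
  funext ⟨x, e⟩
  change cs.titsAction i (cs.titsAction i (x, e)) = (x, e)
  by_cases hx : x = cs.simple i
  · subst hx
    simp only [titsAction, simple_mul_simple_self, one_mul, if_true, add_assoc]
    simp [show (1 + 1 : ZMod 2) = 0 from rfl]
  · have hx' : cs.simple i * x * cs.simple i ≠ cs.simple i := by
      rwa [Ne, simple_mul_mul_simple_eq_iff, simple_mul_simple_self, one_mul]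
    simp only [titsAction, if_neg hx, if_neg hx', add_zero]
    simp [mul_assoc]

theorem commute_titsAction_of_eq_two {i j : B} (h : M i j = 2) :
    Commute (cs.titsAction i) (cs.titsAction j) := by
  have hc := cs.commute_simple_of_eq_two h
  have hconj : ∀ x, (cs.simple j * x * cs.simple j = cs.simple i) ↔ x = cs.simple i := fun x ↦ by
    rw [simple_mul_mul_simple_eq_iff, hc.symm.eq, mul_assoc, simple_mul_simple_self, mul_one]
  have hconj' : ∀ x, (cs.simple i * x * cs.simple i = cs.simple j) ↔ x = cs.simple j := fun x ↦ by
    rw [simple_mul_mul_simple_eq_iff, hc.eq, mul_assoc, simple_mul_simple_self, mul_one]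
  funext ⟨x, e⟩
  change cs.titsAction i (cs.titsAction j (x, e)) = cs.titsAction j (cs.titsAction i (x, e))
  simp only [titsAction, hconj, hconj', Prod.mk.injEq]
  constructor
  · have key : ∀ y, cs.simple i * (cs.simple j * y) = cs.simple j * (cs.simple i * y) := fun y ↦ by
      rw [← mul_assoc, hc.eq, mul_assoc]
    simp only [mul_assoc, key, hc.eq]
  · abel

def titsHom (hM : M.IsRightAngled) : W →* Function.End (W × ZMod 2) :=
  cs.lift ⟨cs.titsAction, hM.isLiftable cs.titsAction_mul_self
    fun _ _ ↦ cs.commute_titsAction_of_eq_two⟩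

theorem titsHom_wordProd (hM : M.IsRightAngled) (ω : List B) (x : W) (e : ZMod 2) :
    cs.titsHom hM (cs.wordProd ω) (x, e) =
      (cs.wordProd ω * x * (cs.wordProd ω)⁻¹, e + ((cs.rightInvSeq ω).count x : ZMod 2)) := by
  induction ω with
  | nil => simp; rfl
  | cons i ω ih =>
    rw [wordProd_cons, map_mul]
    change cs.titsHom hM (cs.simple i) (cs.titsHom hM (cs.wordProd ω) (x, e)) = _
    rw [ih, titsHom, lift_apply_simple]
    have hcond : cs.wordProd ω * x * (cs.wordProd ω)⁻¹ = cs.simple i ↔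
        (cs.wordProd ω)⁻¹ * cs.simple i * cs.wordProd ω = x := by
      constructor
      · intro h'; rw [← h']; group
      · intro h'; rw [← h']; group
    simp only [titsAction, rightInvSeq, List.count_cons, beq_iff_eq, hcond, Nat.cast_add,
      Nat.cast_ite, Nat.cast_one, Nat.cast_zero, Prod.mk.injEq, mul_inv_rev, inv_simple, add_assoc,
      and_true]
    group

theorem cast_count_rightInvSeq_eq (hM : M.IsRightAngled) {ω ω' : List B}
    (h : cs.wordProd ω = cs.wordProd ω') (x : W) :
    ((cs.rightInvSeq ω).count x : ZMod 2) = (cs.rightInvSeq ω').count x := by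
  have := cs.titsHom_wordProd hM ω x 0
  rw [h, titsHom_wordProd] at this
  simpa using (congrArg Prod.snd this).symm

end Tits

theorem mem_rightInvSeq_of_isRightDescent (hM : M.IsRightAngled) {ω : List B} {j : B}
    (hj : cs.IsRightDescent (cs.wordProd ω) j) :
    cs.simple j ∈ cs.rightInvSeq ω := by
  classical
  obtain ⟨ν, hν, hνω⟩ := cs.exists_isReduced (cs.wordProd ω * cs.simple j)
  have hprod : cs.wordProd (ν.concat j) = cs.wordProd ω := by
    rw [wordProd_concat, ← hνω, simple_mul_simple_cancel_right]
  have hred : cs.IsReduced (ν.concat j) := by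
    have := cs.isRightDescent_iff.mp hj
    rw [hνω, hν.eq] at this
    rw [IsReduced, hprod, List.length_concat, this]
  have hmem : cs.simple j ∈ cs.rightInvSeq (ν.concat j) := by
    rw [rightInvSeq_concat]; simp
  have hcount := cs.cast_count_rightInvSeq_eq hM hprod (cs.simple j)
  rw [List.count_eq_one_of_mem hred.nodup_rightInvSeq hmem] at hcount
  by_contra hnot
  rw [List.count_eq_zero_of_not_mem hnot] at hcount
  exact absurd hcount (by decide)

theorem exists_wordProd_mul_simple_eq_eraseIdx (hM : M.IsRightAngled) {ω : List B} {j : B}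
    (hj : cs.IsRightDescent (cs.wordProd ω) j) :
    ∃ k < ω.length, cs.wordProd ω * cs.simple j = cs.wordProd (ω.eraseIdx k) := by
  obtain ⟨k, hk, hget⟩ := List.mem_iff_getElem.mp (cs.mem_rightInvSeq_of_isRightDescent hM hj)
  refine ⟨k, by simpa using hk, ?_⟩
  rw [← hget, ← List.getD_eq_getElem _ 1 hk, wordProd_mul_getD_rightInvSeq]

section Dihedral

variable [DecidableEq B] {a b : B}

def dihedralAction (a b i : B) : Function.End ℤ :=
  fun x ↦ if i = a then -1 - x else if i = b then 1 - x else x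

theorem dihedralAction_mul_self (a b i : B) : dihedralAction a b i * dihedralAction a b i = 1 := by
  funext x
  change dihedralAction a b i (dihedralAction a b i x) = x
  unfold dihedralAction
  split_ifs <;> ring

theorem dihedralAction_of_ne {i : B} (hia : i ≠ a) (hib : i ≠ b) : dihedralAction a b i = 1 := by
  funext x
  simp [dihedralAction, hia, hib]
  rfl

theorem commute_dihedralAction (hab : M a b = 0) {i j : B} (hij : M i j = 2) :
    Commute (dihedralAction a b i) (dihedralAction a b j) := by
  have hba : M b a = 0 := by rwa [M.symmetric]
  by_cases hi : i = a ∨ i = b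
  · by_cases hj : j = a ∨ j = b
    · rcases hi with rfl | rfl <;> rcases hj with rfl | rfl <;>
        simp_all
    · rw [not_or] at hj
      rw [dihedralAction_of_ne hj.1 hj.2]
      exact Commute.one_right _
  · rw [not_or] at hi
    rw [dihedralAction_of_ne hi.1 hi.2]
    exact Commute.one_left _

theorem abs_dihedralAction_le (a b i : B) (x : ℤ) : |dihedralAction a b i x| ≤ |x| + 1 := by
  unfold dihedralAction
  split_ifs
  · rw [← abs_neg]; simpa [add_comm] using abs_add_le x 1
  · simpa [add_comm] using abs_sub_le 1 0 x
  · linarith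

def dihedralHom (hM : M.IsRightAngled) (hab : M a b = 0) : W →* Function.End ℤ :=
  cs.lift ⟨dihedralAction a b, hM.isLiftable (dihedralAction_mul_self a b)
    fun _ _ ↦ commute_dihedralAction hab⟩

variable (hM : M.IsRightAngled) (hab : M a b = 0)

theorem dihedralHom_simple (i : B) : cs.dihedralHom hM hab (cs.simple i) = dihedralAction a b i :=
  cs.lift_apply_simple _ i

theorem abs_dihedralHom_wordProd_apply_zero_le (ω : List B) :
    |cs.dihedralHom hM hab (cs.wordProd ω) 0| ≤ ω.length := by
  induction ω with
  | nil => simp; rfl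
  | cons i ω ih =>
    rw [wordProd_cons, map_mul, List.length_cons, Nat.cast_succ]
    change |cs.dihedralHom hM hab (cs.simple i) (cs.dihedralHom hM hab (cs.wordProd ω) 0)| ≤ _
    rw [dihedralHom_simple]
    exact (abs_dihedralAction_le a b i _).trans (by linarith)

theorem abs_dihedralHom_apply_zero_le_length (w : W) :
    |cs.dihedralHom hM hab w 0| ≤ cs.length w := by
  obtain ⟨ω, hω, rfl⟩ := cs.exists_isReduced w
  rw [hω.eq]
  exact cs.abs_dihedralHom_wordProd_apply_zero_le hM hab ω

theorem dihedralHom_inv_alternatingWord_apply_zero (k : ℕ) :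
    cs.dihedralHom hM hab (cs.wordProd (alternatingWord a b k))⁻¹ 0 = k ∧
      cs.dihedralHom hM hab (cs.wordProd (alternatingWord b a k))⁻¹ 0 = -k := by
  have hne : a ≠ b := by rintro rfl; simp at hab
  induction k with
  | zero => exact ⟨by simp [alternatingWord]; rfl, by simp [alternatingWord]; rfl⟩
  | succ k ih =>
    simp only [alternatingWord_succ, wordProd_concat, mul_inv_rev, inv_simple, map_mul,
      dihedralHom_simple]
    change
      dihedralAction a b b (cs.dihedralHom hM hab (cs.wordProd (alternatingWord b a k))⁻¹ 0) = _ ∧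
        dihedralAction a b a (cs.dihedralHom hM hab (cs.wordProd (alternatingWord a b k))⁻¹ 0) = _
    rw [ih.1, ih.2]
    simp [dihedralAction, hne.symm]
    constructor <;> ring

end Dihedral

theorem isReduced_alternatingWord (hM : M.IsRightAngled) {a b : B} (hab : M a b = 0) (k : ℕ) :
    cs.IsReduced (alternatingWord a b k) := by
  classical
  have hlower : (k : ℤ) ≤ cs.length (cs.wordProd (alternatingWord a b k)) := by
    simpa [(cs.dihedralHom_inv_alternatingWord_apply_zero hM hab k).1, length_inv] using
      cs.abs_dihedralHom_apply_zero_le_length hM hab (cs.wordProd (alternatingWord a b k))⁻¹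
  rw [IsReduced, length_alternatingWord]
  exact le_antisymm (by simpa using cs.length_wordProd_le (alternatingWord a b k))
    (by exact_mod_cast hlower)

theorem exists_isReduced_append_alternatingWord (hM : M.IsRightAngled) {a b : B}
    (hab : M a b = 0) {v : W} (ha : cs.IsRightDescent v a) (hb : cs.IsRightDescent v b) (k : ℕ) :
    ∃ ρ, cs.IsReduced (ρ ++ alternatingWord a b k) ∧
      cs.wordProd (ρ ++ alternatingWord a b k) = v := by
  induction k generalizing a b with
  | zero =>
    obtain ⟨ρ, hρ, rfl⟩ := cs.exists_isReduced v
    exact ⟨ρ, by simpa [alternatingWord] using hρ, by simp [alternatingWord]⟩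
  | succ k ih =>
    obtain ⟨ρ, hred, rfl⟩ := ih (by rwa [M.symmetric]) hb ha
    obtain ⟨p, hp, hexch⟩ := cs.exists_wordProd_mul_simple_eq_eraseIdx hM hb
    have hlen := hred.eq
    simp only [List.length_append, length_alternatingWord] at hp hlen
    rw [alternatingWord_succ, List.concat_eq_append]
    by_cases hpρ : p < ρ.length
    · rw [List.eraseIdx_append_of_lt_length hpρ] at hexch
      have hprod : cs.wordProd (ρ.eraseIdx p ++ (alternatingWord b a k ++ [b])) =
          cs.wordProd (ρ ++ alternatingWord b a k) := by
        rw [← List.append_assoc, wordProd_append _ _ [b], ← hexch]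
        simp
      refine ⟨ρ.eraseIdx p, ?_, hprod⟩
      have := List.length_eraseIdx_add_one hpρ
      rw [IsReduced, hprod, hlen]
      simp only [List.length_append, length_alternatingWord, List.length_singleton]
      omega
    · -- the exchange cannot hit the alternating part: `alternatingWord a b (k + 1)` is reduced
      rw [List.eraseIdx_append_of_length_le (not_lt.mp hpρ), wordProd_append, wordProd_append,
        mul_assoc, mul_left_cancel_iff] at hexch
      have hshort := cs.length_wordProd_le ((alternatingWord b a k).eraseIdx (p - ρ.length))
      have := List.length_eraseIdx_add_one (l := alternatingWord b a k) (i := p - ρ.length)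
        (by simp; omega)
      have hlong := (cs.isReduced_alternatingWord hM hab (k + 1)).eq
      rw [alternatingWord_succ, wordProd_concat, hexch] at hlong
      simp only [length_alternatingWord, List.length_concat] at hlong this
      omega

theorem not_isRightDescent_of_eq_zero (hM : M.IsRightAngled) {a b : B} (hab : M a b = 0)
    {v : W} (ha : cs.IsRightDescent v a) : ¬cs.IsRightDescent v b := fun hb ↦ by
  obtain ⟨ρ, hred, hv⟩ :=
    cs.exists_isReduced_append_alternatingWord hM hab ha hb (cs.length v + 1)
  have := hred.eq
  rw [hv] at this
  simp only [List.length_append, length_alternatingWord] at this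
  omega

theorem not_isLeftDescent_of_eq_zero (hM : M.IsRightAngled) {a b : B} (hab : M a b = 0)
    {v : W} (ha : cs.IsLeftDescent v a) : ¬cs.IsLeftDescent v b := by
  rw [← isRightDescent_inv_iff] at ha ⊢
  exact cs.not_isRightDescent_of_eq_zero hM hab ha

theorem commute_of_mem_of_isReduced_cons (hM : M.IsRightAngled) {t : B} {ω : List B}
    (hred : cs.IsReduced (t :: ω)) (hcomm : Commute (cs.simple t) (cs.wordProd ω)) :
    ∀ u ∈ ω, Commute (cs.simple t) (cs.simple u) := by
  induction ω with
  | nil => simp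
  | cons u ω ih =>
    have htu : Commute (cs.simple t) (cs.simple u) := by
      by_contra htu
      have hlen : cs.length (cs.wordProd (t :: u :: ω)) = ω.length + 2 := hred.eq
      refine cs.not_isLeftDescent_of_eq_zero hM (hM.eq_zero_of_not_commute cs htu)
        (v := cs.wordProd (t :: u :: ω)) ?_ ?_
      · rw [IsLeftDescent, hlen, wordProd_cons, simple_mul_simple_cancel_left]
        have := cs.length_wordProd_le (u :: ω)
        simp only [List.length_cons] at this
        omega
      · rw [IsLeftDescent, hlen, wordProd_cons, hcomm.eq, wordProd_cons, mul_assoc,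
          simple_mul_simple_cancel_left]
        have := cs.length_mul_le (cs.wordProd ω) (cs.simple t)
        have := cs.length_wordProd_le ω
        rw [length_simple] at *
        omega
    rw [List.forall_mem_cons]
    refine ⟨htu, ih ?_ ?_⟩
    · have hswap : cs.wordProd (u :: t :: ω) = cs.wordProd (t :: u :: ω) := by
        simp only [wordProd_cons, ← mul_assoc, htu.eq]
      have : cs.IsReduced (u :: t :: ω) := by
        rw [IsReduced, hswap, hred.eq]; simp
      simpa using this.drop 1
    · rw [wordProd_cons] at hcomm
      simpa using htu.inv_right.mul_right hcomm

end CoxeterSystem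

theorem right_angled_reduced_conjugation_general {B W : Type*} [Group W]
    {M : CoxeterMatrix B} (cs : CoxeterSystem M W)
    (hra : ∀ s t : B, s ≠ t → M s t = 2 ∨ M s t = 0)
    (w : W) (ω : List B) (hw : cs.wordProd ω = w)
    (t t' : B) (hred' : cs.IsReduced (t :: ω))
    (h : cs.simple t * w * cs.simple t' = w) :
    t = t' ∧ ∀ i ∈ ω, cs.simple t * cs.simple i = cs.simple i * cs.simple t := by
  subst hw
  obtain rfl : t = t' := cs.eq_of_simple_mul_mul_simple_eq hra h
  refine ⟨rfl, cs.commute_of_mem_of_isReduced_cons hra hred' ?_⟩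
  calc cs.simple t * cs.wordProd ω
      = cs.simple t * cs.wordProd ω * cs.simple t * cs.simple t := by
        rw [cs.simple_mul_simple_cancel_right]
    _ = cs.wordProd ω * cs.simple t := by rw [h]

/-- Let `(W,S)` be a right-angled Coxeter system, let `w ∈ W` with reduced
representation `w = s₁ ⋯ s_l`, and let `t, t' ∈ S`. If the representation `t s₁ ⋯ s_l` of
`tw` is reduced and `t w t' = w`, then `t = t'` and `t sᵢ = sᵢ t` for each `i ∈ {1, …, l}`. -/
theorem right_angled_reduced_conjugation {B W : Type*} [Finite B] [Group W]
    {M : CoxeterMatrix B} (cs : CoxeterSystem M W)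
    (hra : ∀ s t : B, s ≠ t → M s t = 2 ∨ M s t = 0)
    (w : W) (ω : List B) (hw : cs.wordProd ω = w) (hred : cs.IsReduced ω)
    (t t' : B) (hred' : cs.IsReduced (t :: ω))
    (h : cs.simple t * w * cs.simple t' = w) :
    t = t' ∧ ∀ i ∈ ω, cs.simple t * cs.simple i = cs.simple i * cs.simple t :=
  right_angled_reduced_conjugation_general cs hra w ω hw t t' hred' h
end

section
/- Let (W,S) be a right-angled Coxeter system, let U be a spherical subset of S, let s₀ ∈ S \ U, and let T = {t ∈ U : o(s₀t) = 2}. Then W^U · s₀ ⊆ W^{T ∪ {s₀}}, i.e., for every w ∈ W with S(w) = U, the element ws₀ satisfies S(ws₀) = T ∪ {s₀}. -/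
namespace CoxRA

open List CoxeterSystem

variable {B : Type*} {W : Type*} [Group W] [DecidableEq W] {M : CoxeterMatrix B}
  (cs : CoxeterSystem M W)

omit [DecidableEq W] in
theorem conj_simple_eq_simple_iff (i : B) (t : W) :
    cs.simple i * t * cs.simple i = cs.simple i ↔ t = cs.simple i := by
  constructor
  · intro h
    have := congrArg (fun x => cs.simple i * x * cs.simple i) h
    simpa [mul_assoc, cs.simple_mul_simple_cancel_left, cs.simple_mul_simple_self] using this
  · rintro rfl
    simp [cs.simple_mul_simple_self]

omit [DecidableEq W] in
theorem conj_eq_iff {a : W} (ha : a * a = 1) (t x : W) : a * t * a = x ↔ t = a * x * a := by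
  constructor
  · rintro rfl
    refine (?_ : a * (a * t * a) * a = t).symm
    calc a * (a * t * a) * a = (a * a) * t * (a * a) := by group
      _ = t := by rw [ha]; group
  · rintro rfl
    calc a * (a * x * a) * a = (a * a) * x * (a * a) := by group
      _ = x := by rw [ha]; group

/-- The function underlying the involution on `W × ZMod 2` attached to a simple reflection. -/
noncomputable def sigmaFun (i : B) : W × ZMod 2 → W × ZMod 2 :=
  fun p => (cs.simple i * p.1 * cs.simple i, p.2 + if p.1 = cs.simple i then 1 else 0)

theorem sigmaFun_involutive (i : B) : Function.Involutive (sigmaFun cs i) := by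
  rintro ⟨t, e⟩
  have h2 : ∀ x : ZMod 2, x + x = 0 := by decide
  simp only [sigmaFun, Prod.mk.injEq]
  constructor
  · calc cs.simple i * (cs.simple i * t * cs.simple i) * cs.simple i
        = (cs.simple i * cs.simple i) * t * (cs.simple i * cs.simple i) := by group
      _ = t := by rw [cs.simple_mul_simple_self]; group
  · simp only [conj_simple_eq_simple_iff]
    by_cases h : t = cs.simple i <;> simp [h, add_assoc, h2]

/-- The involution on `W × ZMod 2` attached to a simple reflection. -/
noncomputable def sigma (i : B) : Equiv.Perm (W × ZMod 2) :=
  Function.Involutive.toPerm (sigmaFun cs i) (sigmaFun_involutive cs i)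

theorem sigma_apply (i : B) (p : W × ZMod 2) :
    sigma cs i p = (cs.simple i * p.1 * cs.simple i, p.2 + if p.1 = cs.simple i then 1 else 0) :=
  rfl

theorem sigma_mul_self (i : B) : sigma cs i * sigma cs i = 1 :=
  Equiv.ext fun p => sigmaFun_involutive cs i p

theorem sigma_liftable (hra : ∀ s t : B, s ≠ t → M s t = 2 ∨ M s t = 0) :
    M.IsLiftable (sigma cs) := by
  intro i j
  rcases eq_or_ne i j with rfl | hne
  · rw [M.diagonal, pow_one, sigma_mul_self]
  · rcases hra i j hne with h2 | h0
    · rw [h2]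
      have hsq1 : cs.simple i * cs.simple j * (cs.simple i * cs.simple j) = 1 := by
        have := cs.simple_mul_simple_pow i j
        rwa [h2, pow_two] at this
      have hsq2 : cs.simple j * cs.simple i * (cs.simple j * cs.simple i) = 1 := by
        have := cs.simple_mul_simple_pow' i j
        rwa [h2, pow_two] at this
      have hcomm : cs.simple i * cs.simple j = cs.simple j * cs.simple i := by
        rw [mul_eq_one_iff_eq_inv] at hsq1
        rw [hsq1]
        rw [mul_inv_rev, cs.inv_simple, cs.inv_simple]
      have h2' : ∀ x : ZMod 2, x + x = 0 := by decide
      rw [pow_two]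
      apply Equiv.ext
      rintro ⟨t, e⟩
      rw [Equiv.Perm.mul_apply, Equiv.Perm.mul_apply, Equiv.Perm.mul_apply]
      simp only [sigma_apply, Equiv.Perm.one_apply]
      have hss : ∀ k : B, cs.simple k * cs.simple k = 1 := cs.simple_mul_simple_self
      have e2 : (cs.simple j * t * cs.simple j = cs.simple i) ↔ t = cs.simple i := by
        rw [conj_eq_iff (hss j)]
        have : cs.simple j * cs.simple i * cs.simple j = cs.simple i := by
          rw [← hcomm]; rw [mul_assoc, hss j]; group
        rw [this]
      have e3 : (cs.simple i * (cs.simple j * t * cs.simple j) * cs.simple i = cs.simple j)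
          ↔ t = cs.simple j := by
        rw [conj_eq_iff (hss i)]
        have : cs.simple i * cs.simple j * cs.simple i = cs.simple j := by
          rw [hcomm]; rw [mul_assoc, hss i]; group
        rw [this, conj_simple_eq_simple_iff]
      have e4 : (cs.simple j * (cs.simple i * (cs.simple j * t * cs.simple j) * cs.simple i)
          * cs.simple j = cs.simple i) ↔ t = cs.simple i := by
        rw [conj_eq_iff (hss j)]
        have h5 : cs.simple j * cs.simple i * cs.simple j = cs.simple i := by
          rw [← hcomm]; rw [mul_assoc, hss j]; group
        rw [h5, conj_eq_iff (hss i)]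
        have h6 : cs.simple i * cs.simple i * cs.simple i = cs.simple i := by
          rw [hss i]; group
        rw [h6, e2]
      rw [Prod.mk.injEq]
      constructor
      · calc cs.simple i * (cs.simple j * (cs.simple i * (cs.simple j * t * cs.simple j)
              * cs.simple i) * cs.simple j) * cs.simple i
            = (cs.simple i * cs.simple j * (cs.simple i * cs.simple j)) * t
              * (cs.simple j * cs.simple i * (cs.simple j * cs.simple i)) := by group
          _ = t := by rw [hsq1, hsq2]; group
      · simp only [e2, e3, e4]
        have h20 : (2 : ZMod 2) = 0 := by decide
        by_cases hi : t = cs.simple i <;> by_cases hj : t = cs.simple j <;>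
          simp [hi, hj, add_assoc, h2'] <;> abel_nf <;> simp [h2', h20, ite_self]
    · rw [h0, pow_zero]

variable (hra : ∀ s t : B, s ≠ t → M s t = 2 ∨ M s t = 0)

/-- The homomorphism from `W` to permutations of `W × ZMod 2`. -/
noncomputable def phi : W →* Equiv.Perm (W × ZMod 2) :=
  cs.lift ⟨fun i => sigma cs i, sigma_liftable cs hra⟩

theorem phi_simple (i : B) : phi cs hra (cs.simple i) = sigma cs i :=
  cs.lift_apply_simple (sigma_liftable cs hra) i

theorem phi_wordProd (ω : List B) (t : W) (ε : ZMod 2) :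
    phi cs hra (cs.wordProd ω) (t, ε) =
      (cs.wordProd ω * t * (cs.wordProd ω)⁻¹,
        ε + ((cs.rightInvSeq ω).count t : ZMod 2)) := by
  induction ω using List.reverseRecOn generalizing t ε with
  | nil => simp [cs.wordProd_nil]
  | append_singleton ω i ih =>
    have hconcat : ω ++ [i] = ω.concat i := by simp
    rw [hconcat, cs.wordProd_concat, map_mul, Equiv.Perm.mul_apply, phi_simple, sigma_apply]
    simp only
    rw [ih]
    have hconj : (MulAut.conj (cs.simple i)) (cs.simple i * t * cs.simple i) = t := by
      simp only [MulAut.conj_apply, cs.inv_simple]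
      calc cs.simple i * (cs.simple i * t * cs.simple i) * cs.simple i
          = (cs.simple i * cs.simple i) * t * (cs.simple i * cs.simple i) := by group
        _ = t := by rw [cs.simple_mul_simple_self]; group
    have hcount : ((cs.rightInvSeq (ω.concat i)).count t : ZMod 2)
        = ((cs.rightInvSeq ω).count (cs.simple i * t * cs.simple i) : ZMod 2)
          + (if t = cs.simple i then 1 else 0) := by
      rw [cs.rightInvSeq_concat]
      rw [List.concat_eq_append, List.count_append]
      have h1 : (List.map (⇑(MulAut.conj (cs.simple i))) (cs.rightInvSeq ω)).count t
          = (cs.rightInvSeq ω).count (cs.simple i * t * cs.simple i) := by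
        conv_lhs => rw [← hconj]
        exact List.count_map_of_injective _ _ (MulAut.conj (cs.simple i)).injective _
      have h2 : List.count t [cs.simple i] = if t = cs.simple i then 1 else 0 := by
        by_cases h : t = cs.simple i <;> simp [h, List.count_singleton', eq_comm]
      rw [h1, h2]
      push_cast
      by_cases h : t = cs.simple i <;> simp [h]
    rw [hcount, Prod.mk.injEq]
    constructor
    · rw [mul_inv_rev, cs.inv_simple]
      group
    · ring

/-- The reflection cocycle with `ZMod 2` coefficients. -/
noncomputable def racN (w t : W) : ZMod 2 := (phi cs hra w (t, 0)).2

theorem phi_apply (w t : W) (ε : ZMod 2) :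
    phi cs hra w (t, ε) = (w * t * w⁻¹, ε + racN cs hra w t) := by
  obtain ⟨ω, rfl⟩ := cs.wordProd_surjective w
  rw [phi_wordProd]
  unfold racN
  rw [phi_wordProd]
  simp

theorem racN_eq_count {ω : List B} {w : W} (hw : cs.wordProd ω = w) (t : W) :
    racN cs hra w t = ((cs.rightInvSeq ω).count t : ZMod 2) := by
  subst hw
  unfold racN
  rw [phi_wordProd]
  simp

theorem racN_mul_simple (w : W) (i : B) (y : W) :
    racN cs hra (w * cs.simple i) y
      = (if y = cs.simple i then 1 else 0) + racN cs hra w (cs.simple i * y * cs.simple i) := by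
  unfold racN
  rw [map_mul, Equiv.Perm.mul_apply, phi_simple, sigma_apply]
  simp only
  rw [phi_apply]
  simp only [zero_add]
  unfold racN
  ring

theorem racN_of_not_descent {w : W} {i : B} (h : ¬cs.IsRightDescent w i) :
    racN cs hra w (cs.simple i) = 0 := by
  obtain ⟨ω, hred, rfl⟩ := cs.exists_reduced_word' w
  rw [racN_eq_count cs hra rfl]
  have : (cs.rightInvSeq ω).count (cs.simple i) = 0 := by
    by_contra hc
    have hmem : cs.simple i ∈ cs.rightInvSeq ω :=
      List.count_pos_iff.mp (Nat.pos_of_ne_zero hc)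
    exact h ((cs.isRightInversion_simple_iff_isRightDescent _ i).mp
      (cs.isRightInversion_of_mem_rightInvSeq hred hmem))
  rw [this]
  simp

theorem racN_of_descent {w : W} {i : B} (h : cs.IsRightDescent w i) :
    racN cs hra w (cs.simple i) = 1 := by
  have hnd : ¬cs.IsRightDescent (w * cs.simple i) i :=
    (cs.isRightDescent_iff_not_isRightDescent_mul).mp h
  have h0 : racN cs hra (w * cs.simple i) (cs.simple i) = 0 := racN_of_not_descent cs hra hnd
  have := racN_mul_simple cs hra (w * cs.simple i) i (cs.simple i)
  rw [cs.simple_mul_simple_cancel_right] at this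
  rw [this]
  have : cs.simple i * cs.simple i * cs.simple i = cs.simple i := by
    rw [cs.simple_mul_simple_self]; group
  rw [this, h0]
  simp

theorem descent_iff_racN {w : W} {i : B} :
    cs.IsRightDescent w i ↔ racN cs hra w (cs.simple i) = 1 := by
  constructor
  · exact racN_of_descent cs hra
  · intro h1
    by_contra h
    rw [racN_of_not_descent cs hra h] at h1
    exact absurd h1 (by decide)

include hra in
theorem exists_eraseIdx_of_descent {w : W} {i : B} (h : cs.IsRightDescent w i)
    {ω : List B} (hred : cs.IsReduced ω) (hw : cs.wordProd ω = w) :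
    ∃ m < ω.length, cs.wordProd (ω.eraseIdx m) = w * cs.simple i := by
  have h1 := racN_of_descent cs hra h
  rw [racN_eq_count cs hra hw] at h1
  have hc : (cs.rightInvSeq ω).count (cs.simple i) ≠ 0 := by
    intro h0
    rw [h0] at h1
    exact absurd h1 (by decide)
  have hmem : cs.simple i ∈ cs.rightInvSeq ω := List.count_pos_iff.mp (Nat.pos_of_ne_zero hc)
  obtain ⟨m, hm, hget⟩ := List.mem_iff_getElem.mp hmem
  rw [cs.length_rightInvSeq] at hm
  refine ⟨m, hm, ?_⟩
  have hgetD : (cs.rightInvSeq ω).getD m 1 = cs.simple i := by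
    rw [List.getD_eq_getElem?_getD]
    rw [List.getElem?_eq_getElem (by rwa [cs.length_rightInvSeq])]
    simpa using hget
  rw [← hw, ← cs.wordProd_mul_getD_rightInvSeq ω m, hgetD]

/-! ### Lists: eraseIdx and append -/

theorem eraseIdx_append_left' {α : Type*} (γ δ : List α) (m : ℕ) (h : m < γ.length) :
    (γ ++ δ).eraseIdx m = γ.eraseIdx m ++ δ := by
  induction γ generalizing m with
  | nil => simp at h
  | cons a γ ih =>
    cases m with
    | zero => simp [List.eraseIdx]
    | succ m =>
      simp only [List.cons_append, List.eraseIdx, List.append_eq]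
      rw [ih m (by simpa using h)]

theorem eraseIdx_append_right' {α : Type*} (γ δ : List α) (m : ℕ) (h : γ.length ≤ m) :
    (γ ++ δ).eraseIdx m = γ ++ δ.eraseIdx (m - γ.length) := by
  induction γ generalizing m with
  | nil => simp
  | cons a γ ih =>
    cases m with
    | zero => simp at h
    | succ m =>
      simp only [List.cons_append, List.eraseIdx, List.length_cons, List.append_eq]
      rw [ih m (by simpa using h)]
      simp [Nat.succ_sub_succ]

/-! ### The infinite dihedral model -/

/-- Reflection of `ℤ` at 0. -/
def aP : Equiv.Perm ℤ := Function.Involutive.toPerm (fun x => -x) (fun x => by simp)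

/-- Reflection of `ℤ` at 1. -/
def bP : Equiv.Perm ℤ := Function.Involutive.toPerm (fun x => 2 - x) (fun x => by dsimp only; omega)

@[simp] theorem aP_apply (x : ℤ) : aP x = -x := rfl
@[simp] theorem bP_apply (x : ℤ) : bP x = 2 - x := rfl

theorem aP_sq : aP * aP = 1 := Equiv.ext fun x => by simp [Equiv.Perm.mul_apply]
theorem bP_sq : bP * bP = 1 := Equiv.ext fun x => by
  simp [Equiv.Perm.mul_apply]

variable [DecidableEq B]

/-- The generators-to-dihedral map killing all simple reflections except `i`, `j`. -/
def f2 (i j : B) : B → Equiv.Perm ℤ := fun k => if k = i then aP else if k = j then bP else 1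

theorem f2_sq (i j k : B) : f2 i j k * f2 i j k = 1 := by
  unfold f2
  split_ifs with h1 h2
  · exact aP_sq
  · exact bP_sq
  · simp

include hra in
theorem f2_liftable (i j : B) (hij : i ≠ j) (h0 : M i j = 0) : M.IsLiftable (f2 i j) := by
  intro k l
  rcases eq_or_ne k l with rfl | hne
  · rw [M.diagonal, pow_one, f2_sq]
  · rcases hra k l hne with h2 | hz
    · rw [h2, pow_two]
      by_cases hk1 : f2 i j k = 1
      · rw [hk1, one_mul, f2_sq]
      · by_cases hl1 : f2 i j l = 1
        · rw [hl1, mul_one, f2_sq]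
        · exfalso
          have hmem : ∀ m : B, f2 i j m ≠ 1 → m = i ∨ m = j := by
            intro m hm
            unfold f2 at hm
            split_ifs at hm with ha hb
            · exact Or.inl ha
            · exact Or.inr hb
            · exact absurd rfl hm
          rcases hmem k hk1 with rfl | rfl <;> rcases hmem l hl1 with rfl | rfl
          · exact hne rfl
          · rw [h0] at h2; exact absurd h2.symm (by norm_num)
          · rw [M.symmetric k l, h0] at h2; exact absurd h2.symm (by norm_num)
          · exact hne rfl
    · rw [hz, pow_zero]

/-- Alternating word of given length. -/
def altL : B → B → ℕ → List B
  | _, _, 0 => []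
  | c, c', (n+1) => c :: altL c' c n

omit [DecidableEq W] [DecidableEq B] in
@[simp] theorem altL_zero (c c' : B) : altL c c' 0 = [] := rfl
omit [DecidableEq W] [DecidableEq B] in
theorem altL_succ (c c' : B) (n : ℕ) : altL c c' (n+1) = c :: altL c' c n := rfl

omit [DecidableEq W] [DecidableEq B] in
theorem altL_length (n : ℕ) : ∀ c c' : B, (altL c c' n).length = n := by
  induction n with
  | zero => intro c c'; rfl
  | succ n ih => intro c c'; simp [altL_succ, ih]

omit [DecidableEq W] [DecidableEq B] in
theorem alt_values (i j : B) (ψ : W →* Equiv.Perm ℤ) (hψi : ψ (cs.simple i) = aP)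
    (hψj : ψ (cs.simple j) = bP) : ∀ n : ℕ,
    (ψ (cs.wordProd (altL i j n)) 0 = (if Even n then -(n:ℤ) else 1 - (n:ℤ)) ∧
     ψ (cs.wordProd (altL i j n)) 1 = (if Even n then 1 - (n:ℤ) else -(n:ℤ))) ∧
    (ψ (cs.wordProd (altL j i n)) 0 = (if Even n then (n:ℤ) else (n:ℤ) + 1) ∧
     ψ (cs.wordProd (altL j i n)) 1 = (if Even n then (n:ℤ) + 1 else (n:ℤ))) := by
  intro n
  induction n with
  | zero => simp [altL_zero, cs.wordProd_nil]
  | succ n ih =>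
    obtain ⟨⟨h1, h2⟩, ⟨h3, h4⟩⟩ := ih
    refine ⟨⟨?_, ?_⟩, ⟨?_, ?_⟩⟩
    · rw [altL_succ, cs.wordProd_cons, map_mul, Equiv.Perm.mul_apply, hψi, h3, aP_apply]
      by_cases he : Even n <;> simp [he, Nat.even_add_one] <;> push_cast <;> ring
    · rw [altL_succ, cs.wordProd_cons, map_mul, Equiv.Perm.mul_apply, hψi, h4, aP_apply]
      by_cases he : Even n <;> simp [he, Nat.even_add_one] <;> push_cast <;> ring
    · rw [altL_succ, cs.wordProd_cons, map_mul, Equiv.Perm.mul_apply, hψj, h1, bP_apply]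
      by_cases he : Even n <;> simp [he, Nat.even_add_one] <;> push_cast <;> ring
    · rw [altL_succ, cs.wordProd_cons, map_mul, Equiv.Perm.mul_apply, hψj, h2, bP_apply]
      by_cases he : Even n <;> simp [he, Nat.even_add_one] <;> push_cast <;> ring

omit [DecidableEq W] [DecidableEq B] in
theorem alt_invariant (i j : B) (ψ : W →* Equiv.Perm ℤ) (hψi : ψ (cs.simple i) = aP)
    (hψj : ψ (cs.simple j) = bP) (n : ℕ) {c c' : B}
    (hcc : (c = i ∧ c' = j) ∨ (c = j ∧ c' = i)) :
    (ψ (cs.wordProd (altL c c' n)) 0).natAbs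
      + (ψ (cs.wordProd (altL c c' n)) 1 - 1).natAbs = 2 * n := by
  rcases hcc with ⟨rfl, rfl⟩ | ⟨rfl, rfl⟩
  · obtain ⟨⟨h1, h2⟩, -⟩ := alt_values cs c c' ψ hψi hψj n
    rw [h1, h2]
    by_cases he : Even n
    · rw [if_pos he, if_pos he]; omega
    · rw [if_neg he, if_neg he]
      have hodd := Nat.not_even_iff.mp he
      omega
  · obtain ⟨-, ⟨h3, h4⟩⟩ := alt_values cs c' c ψ hψi hψj n
    rw [h3, h4]
    by_cases he : Even n
    · rw [if_pos he, if_pos he]; omega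
    · rw [if_neg he, if_neg he]
      have hodd := Nat.not_even_iff.mp he
      omega

omit [DecidableEq W] [DecidableEq B] in
theorem word_bound (i j : B) (ψ : W →* Equiv.Perm ℤ) (hψi : ψ (cs.simple i) = aP)
    (hψj : ψ (cs.simple j) = bP) (hψ1 : ∀ k : B, k ≠ i → k ≠ j → ψ (cs.simple k) = 1) :
    ∀ L : List B, (ψ (cs.wordProd L) 0).natAbs
      + (ψ (cs.wordProd L) 1 - 1).natAbs ≤ 2 * L.length := by
  intro L
  induction L with
  | nil => simp [cs.wordProd_nil]
  | cons c L ih =>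
    rw [cs.wordProd_cons, map_mul]
    rw [Equiv.Perm.mul_apply, Equiv.Perm.mul_apply]
    by_cases hci : c = i
    · subst hci
      rw [hψi, aP_apply, aP_apply]
      simp only [List.length_cons]
      omega
    · by_cases hcj : c = j
      · subst hcj
        rw [hψj, bP_apply, bP_apply]
        simp only [List.length_cons]
        omega
      · rw [hψ1 c hci hcj]
        simp only [Equiv.Perm.one_apply, List.length_cons]
        omega

include hra in
/-- No element of a right-angled Coxeter group has two right descents `i ≠ j`
with `M i j = 0`. -/
theorem not_two_descents {i j : B} (hij : i ≠ j) (h0 : M i j = 0) (v : W)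
    (hdi : cs.IsRightDescent v i) (hdj : cs.IsRightDescent v j) : False := by
  set ψ : W →* Equiv.Perm ℤ := cs.lift ⟨f2 i j, f2_liftable hra i j hij h0⟩ with hψ
  have hψi : ψ (cs.simple i) = aP := by
    rw [hψ, cs.lift_apply_simple]
    simp [f2]
  have hψj : ψ (cs.simple j) = bP := by
    rw [hψ, cs.lift_apply_simple]
    simp [f2, hij.symm]
  have key : ∀ k : ℕ, ∃ (c c' : B) (γ : List B),
      ((c = i ∧ c' = j) ∨ (c = j ∧ c' = i)) ∧
      cs.wordProd (γ ++ (altL c c' k).reverse) = v ∧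
      cs.IsReduced (γ ++ (altL c c' k).reverse) := by
    intro k
    induction k with
    | zero =>
      obtain ⟨ω, hred, hw⟩ := cs.exists_reduced_word' v
      exact ⟨i, j, ω, Or.inl ⟨rfl, rfl⟩, by simpa [altL_zero] using hw.symm,
        by simpa [altL_zero] using hred⟩
    | succ k ih =>
      obtain ⟨c, c', γ, hcc, hπ, hred⟩ := ih
      have hdesc : cs.IsRightDescent v c' := by
        rcases hcc with ⟨-, rfl⟩ | ⟨-, rfl⟩
        · exact hdj
        · exact hdi
      obtain ⟨m, hm, herase⟩ :=
        exists_eraseIdx_of_descent cs hra hdesc hred hπ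
      have haltrev : (altL c' c (k+1)).reverse = (altL c c' k).reverse ++ [c'] := by
        rw [altL_succ]
        simp
      have hlen_ω : (γ ++ (altL c c' k).reverse).length = γ.length + k := by
        simp [altL_length]
      by_cases hcase : m < γ.length
      · refine ⟨c', c, γ.eraseIdx m, ?_, ?_, ?_⟩
        · tauto
        · rw [haltrev, ← List.append_assoc]
          rw [cs.wordProd_append, cs.wordProd_singleton]
          rw [← eraseIdx_append_left' γ _ m hcase, herase]
          rw [mul_assoc, cs.simple_mul_simple_self, mul_one]
        · have hπnew : cs.wordProd (γ.eraseIdx m ++ (altL c' c (k+1)).reverse) = v := by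
            rw [haltrev, ← List.append_assoc]
            rw [cs.wordProd_append, cs.wordProd_singleton]
            rw [← eraseIdx_append_left' γ _ m hcase, herase]
            rw [mul_assoc, cs.simple_mul_simple_self, mul_one]
          unfold CoxeterSystem.IsReduced at hred ⊢
          rw [hπnew, hπ] at *
          rw [hlen_ω] at hred
          have h1 : (γ.eraseIdx m).length = γ.length - 1 := by
            rw [List.length_eraseIdx]
            simp [hcase]
          simp only [List.length_append, List.length_reverse, altL_length, h1]
          omega
      · exfalso
        push_neg at hcase
        have hm' : m - γ.length < k := by
          rw [hlen_ω] at hm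
          omega
        have hk1 : 1 ≤ k := by omega
        have herase2 : (γ ++ (altL c c' k).reverse).eraseIdx m
            = γ ++ ((altL c c' k).reverse.eraseIdx (m - γ.length)) :=
          eraseIdx_append_right' γ _ m hcase
        rw [herase2, cs.wordProd_append] at herase
        rw [cs.wordProd_append] at hπ
        have hcancel : cs.wordProd ((altL c c' k).reverse.eraseIdx (m - γ.length))
            = cs.wordProd ((altL c c' k).reverse) * cs.simple c' := by
          apply mul_left_cancel (a := cs.wordProd γ)
          rw [herase, ← hπ]
          group
        have heq : cs.wordProd (altL c' c (k+1))
            = cs.wordProd (((altL c c' k).reverse.eraseIdx (m - γ.length)).reverse) := by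
          have e1 : cs.wordProd ((altL c' c (k+1)).reverse)
              = cs.wordProd ((altL c c' k).reverse.eraseIdx (m - γ.length)) := by
            rw [haltrev, cs.wordProd_append, cs.wordProd_singleton, hcancel]
          have := congrArg (fun x => x⁻¹) e1
          simpa [cs.wordProd_reverse] using this
        have hswap : ((c' = i ∧ c = j) ∨ (c' = j ∧ c = i)) := by tauto
        have hinv := alt_invariant cs i j ψ hψi hψj (k+1) hswap
        rw [heq] at hinv
        have hbound := word_bound cs i j ψ hψi hψj
          (by
            intro l hli hlj
            rw [hψ, cs.lift_apply_simple]
            simp [f2, hli, hlj])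
          (((altL c c' k).reverse.eraseIdx (m - γ.length)).reverse)
        have hlen2 : (((altL c c' k).reverse.eraseIdx (m - γ.length)).reverse).length = k - 1 := by
          rw [List.length_reverse, List.length_eraseIdx]
          simp [altL_length]
          omega
        rw [hlen2, hinv] at hbound
        omega
  obtain ⟨c, c', γ, hcc, hπ, hred⟩ := key (cs.length v + 1)
  unfold CoxeterSystem.IsReduced at hred
  rw [hπ] at hred
  simp only [List.length_append, List.length_reverse, altL_length] at hred
  omega

include hra in
omit [DecidableEq W] in
theorem simple_inj : Function.Injective cs.simple := by
  intro i j hij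
  by_contra hne
  have hsq : ∀ x : B → Multiplicative (ZMod 2), x * x = 1 := by
    intro x
    funext b
    have : ∀ y : Multiplicative (ZMod 2), y * y = 1 := by decide
    exact this (x b)
  have hlift : M.IsLiftable (fun k : B => (fun b => if b = k then
      Multiplicative.ofAdd (1 : ZMod 2) else 1 : B → Multiplicative (ZMod 2))) := by
    intro k l
    rcases eq_or_ne k l with rfl | hkl
    · rw [M.diagonal, pow_one, hsq]
    · rcases hra k l hkl with h2 | h0
      · rw [h2, pow_two, hsq]
      · rw [h0, pow_zero]
  set ψ := cs.lift ⟨_, hlift⟩ with hψ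
  have h1 := congrArg ψ hij
  rw [hψ, cs.lift_apply_simple, cs.lift_apply_simple] at h1
  have h2 := congrFun h1 i
  simp only [if_pos rfl] at h2
  rw [if_neg hne] at h2
  exact absurd h2 (by decide)

include hra in
omit [DecidableEq W] in
theorem pow_two_ne_one_of_M_zero {i j : B} (hij : i ≠ j) (h0 : M i j = 0) :
    (cs.simple i * cs.simple j) ^ 2 ≠ 1 := by
  intro hsq
  set ψ : W →* Equiv.Perm ℤ := cs.lift ⟨f2 i j, f2_liftable hra i j hij h0⟩ with hψ
  have hψi : ψ (cs.simple i) = aP := by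
    rw [hψ, cs.lift_apply_simple]; simp [f2]
  have hψj : ψ (cs.simple j) = bP := by
    rw [hψ, cs.lift_apply_simple]; simp [f2, hij.symm]
  have h1 := congrArg ψ hsq
  rw [map_pow, map_mul, hψi, hψj, map_one] at h1
  have h2 := congrArg (fun (e : Equiv.Perm ℤ) => e 0) h1
  simp only [pow_two, Equiv.Perm.mul_apply, aP_apply, bP_apply, Equiv.Perm.one_apply] at h2
  omega

include hra in
omit [DecidableEq W] in
theorem orderOf_eq_two_of_M_two {i j : B} (h2 : M i j = 2) :
    orderOf (cs.simple i * cs.simple j) = 2 := by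
  have hij : i ≠ j := by
    intro h
    rw [h, M.diagonal] at h2
    norm_num at h2
  have hpow : (cs.simple i * cs.simple j) ^ 2 = 1 := by
    have := cs.simple_mul_simple_pow i j
    rwa [h2] at this
  have hne : cs.simple i * cs.simple j ≠ 1 := by
    intro h
    have : cs.simple j = cs.simple i := by
      have := congrArg (fun x => cs.simple i * x) h
      simpa [cs.simple_mul_simple_cancel_left] using this
    exact hij (simple_inj cs hra this).symm
  exact orderOf_eq_prime hpow hne

include hra in
omit [DecidableEq W] in
theorem simple_comm_of_M_two {i j : B} (h2 : M i j = 2) :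
    cs.simple i * cs.simple j = cs.simple j * cs.simple i := by
  have hsq1 : cs.simple i * cs.simple j * (cs.simple i * cs.simple j) = 1 := by
    have := cs.simple_mul_simple_pow i j
    rwa [h2, pow_two] at this
  rw [mul_eq_one_iff_eq_inv] at hsq1
  rw [hsq1, mul_inv_rev, cs.inv_simple, cs.inv_simple]

end CoxRA

/-- Let `(W,S)` be a right-angled Coxeter system, let `U` be a spherical
subset of `S`, let `s₀ ∈ S \ U`, and let `T = {t ∈ U : o(s₀t) = 2}`. Then
`W^U · s₀ ⊆ W^{T ∪ {s₀}}`, i.e. for every `w ∈ W` with `S(w) = U`, the element `w s₀`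
satisfies `S(w s₀) = T ∪ {s₀}`. -/
theorem descents_mul_simple_right_angled {B W : Type*} [Finite B] [Group W]
    {M : CoxeterMatrix B} (cs : CoxeterSystem M W)
    (hra : ∀ s t : B, s ≠ t → M s t = 2 ∨ M s t = 0)
    (U : Set B)
    (hU : ((Subgroup.closure (cs.simple '' U) : Subgroup W) : Set W).Finite)
    (s₀ : B) (hs₀ : s₀ ∉ U) :
    ∀ w : W, {s : B | cs.IsRightDescent w s} = U →
      {s : B | cs.IsRightDescent (w * cs.simple s₀) s} =
        {t ∈ U | orderOf (cs.simple s₀ * cs.simple t) = 2} ∪ {s₀} := by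
  classical
  intro w hw
  have hdesc : ∀ u : B, cs.IsRightDescent w u ↔ u ∈ U := fun u => by
    rw [← hw]; exact Iff.rfl
  have hs₀d : ¬cs.IsRightDescent w s₀ := fun h => hs₀ ((hdesc s₀).mp h)
  have hws₀ : cs.IsRightDescent (w * cs.simple s₀) s₀ := by
    by_contra h
    exact hs₀d ((cs.isRightDescent_iff_not_isRightDescent_mul).mpr h)
  ext t
  simp only [Set.mem_setOf_eq, Set.mem_union, Set.mem_singleton_iff, Set.mem_sep_iff]
  by_cases ht0 : t = s₀
  · subst ht0
    constructor
    · intro _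
      exact Or.inr rfl
    · intro _
      exact hws₀
  · have hst : s₀ ≠ t := fun h => ht0 h.symm
    have hsimple_ne : cs.simple t ≠ cs.simple s₀ := by
      intro h
      exact ht0 (CoxRA.simple_inj cs hra h)
    rcases hra s₀ t hst with h2 | h0
    · -- commuting case
      have hcomm := CoxRA.simple_comm_of_M_two cs hra h2
      have hconj : cs.simple s₀ * cs.simple t * cs.simple s₀ = cs.simple t := by
        rw [hcomm, mul_assoc, cs.simple_mul_simple_self, mul_one]
      have hLHS : cs.IsRightDescent (w * cs.simple s₀) t ↔ t ∈ U := by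
        rw [CoxRA.descent_iff_racN cs hra, CoxRA.racN_mul_simple cs hra,
          if_neg hsimple_ne, hconj, zero_add, ← CoxRA.descent_iff_racN cs hra]
        exact hdesc t
      rw [hLHS]
      have horder : orderOf (cs.simple s₀ * cs.simple t) = 2 :=
        CoxRA.orderOf_eq_two_of_M_two cs hra h2
      constructor
      · intro h
        exact Or.inl ⟨h, horder⟩
      · rintro (⟨h, -⟩ | h)
        · exact h
        · exact absurd h ht0
    · -- non-commuting (infinite) case: both sides false
      constructor
      · intro h
        exact absurd (CoxRA.not_two_descents cs hra hst h0 (w * cs.simple s₀) hws₀ h) id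
      · rintro (⟨-, h⟩ | h)
        · exfalso
          have := pow_orderOf_eq_one (cs.simple s₀ * cs.simple t)
          rw [h] at this
          exact CoxRA.pow_two_ne_one_of_M_zero cs hra hst h0 this
        · exact absurd h ht0
end

section
/- Let (W,S) be a right-angled Coxeter system and let s₀ ∈ S be such that o(s₀s) = ∞ for every s ∈ S \ {s₀}. Then W^{{s₀}} = {w ∈ W : S(w) = {s₀}} is quasi-dense in W with respect to the word metric. -/
/-!
Since `s₀ s` has infinite order for every other generator `s`, the group `W` behaves like the
free product of the subgroup generated by `S \ {s₀}` with `⟨s₀⟩`. Concretely, `W` acts on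
alternating words `vₖ s₀ ⋯ v₁ s₀ u` (with syllables in `W`), and the word obtained by reading `w`
from the empty word has weight `ℓ(u) + ∑ (ℓ(vⱼ) + 1)` equal to `ℓ(w)`: at least `ℓ(w)` because the
word evaluates back to `w`, at most `ℓ(w)` because each generator changes it by at most one. When
this word ends in `s₀` (that is, `u = 1`), multiplying by `s₀` lowers the weight while any other
generator raises it, so `S(w) = {s₀}`. Either `w` or `w s₀` is of this kind, so `N = 1` works.
-/

/-- The word `vₖ x ⋯ v₁ x u` of a free product `G ∗ ⟨x | x² = 1⟩`, with `last = u` and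
`syllables = [v₁, …, vₖ]`; only `vₖ` may be trivial. -/
@[ext]
structure AltWord (G : Type*) [Group G] where
  last : G
  syllables : List G
  one_notMem_dropLast : 1 ∉ syllables.dropLast

namespace AltWord

variable {G : Type*} [Group G]

def nil : AltWord G := ⟨1, [], by simp⟩

def mulRight (g : G) : Equiv.Perm (AltWord G) where
  toFun z := ⟨z.last * g, z.syllables, z.one_notMem_dropLast⟩
  invFun z := ⟨z.last * g⁻¹, z.syllables, z.one_notMem_dropLast⟩
  left_inv z := by simp
  right_inv z := by simp

@[simp]
lemma mulRight_apply (g : G) (z : AltWord G) :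
    mulRight g z = ⟨z.last * g, z.syllables, z.one_notMem_dropLast⟩ := rfl

lemma mulRight_mul_mulRight (g h : G) : mulRight g * mulRight h = mulRight (h * g) := by
  ext z <;> simp [mul_assoc]

lemma mulRight_pow (g : G) (n : ℕ) : mulRight g ^ n = mulRight (g ^ n) := by
  induction n with
  | zero => ext z <;> simp
  | succ n ih => rw [pow_succ, ih, mulRight_mul_mulRight, ← pow_succ']

open scoped Classical in
/-- Right multiplication by `x`. -/
noncomputable def flip : AltWord G → AltWord G
  | ⟨u, [], _⟩ => ⟨1, [u], by simp⟩
  | ⟨u, v :: l, h⟩ =>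
    if hu : u = 1 then ⟨v, l, fun h' => h (by cases l <;> simp_all)⟩
    else ⟨1, u :: v :: l, by simpa [eq_comm] using And.intro hu h⟩

def EndsWithX (z : AltWord G) : Prop := z.last = 1 ∧ z.syllables ≠ []

@[simp]
lemma flip_flip (z : AltWord G) : z.flip.flip = z := by
  obtain ⟨u, _ | ⟨v, _ | ⟨v', l⟩⟩, h⟩ := z
  · simp [flip]
  · by_cases hu : u = 1 <;> simp [flip, hu]
  · by_cases hu : u = 1
    · have hv : v ≠ 1 := fun hv => h (by simp [hv])
      simp [flip, hu, hv]
    · simp [flip, hu]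

noncomputable def flipPerm : Equiv.Perm (AltWord G) := Function.Involutive.toPerm flip flip_flip

@[simp]
lemma flipPerm_apply (z : AltWord G) : flipPerm z = z.flip := rfl

lemma endsWithX_flip_iff (z : AltWord G) : z.flip.EndsWithX ↔ ¬ z.EndsWithX := by
  obtain ⟨u, _ | ⟨v, l⟩, h⟩ := z
  · simp [flip, EndsWithX]
  · by_cases hu : u = 1
    · have : l ≠ [] → v ≠ 1 := fun hl hv => h (by cases l <;> simp_all)
      simp [flip, EndsWithX, hu]
      tauto
    · simp [flip, EndsWithX, hu]

def eval (x : G) (z : AltWord G) : G := (z.syllables.reverse.map (· * x)).prod * z.last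

@[simp]
lemma eval_nil (x : G) : nil.eval x = 1 := by simp [nil, eval]

lemma eval_mulRight (x g : G) (z : AltWord G) : (mulRight g z).eval x = z.eval x * g := by
  simp [eval, mul_assoc]

lemma eval_flip {x : G} (hx : x * x = 1) (z : AltWord G) : z.flip.eval x = z.eval x * x := by
  obtain ⟨u, _ | ⟨v, l⟩, h⟩ := z
  · simp [flip, eval]
  · by_cases hu : u = 1 <;> simp [flip, eval, hu, mul_assoc, hx]

variable (len : G → ℕ)

def weight (z : AltWord G) : ℕ := len z.last + (z.syllables.map (len · + 1)).sum

lemma weight_flip_of_endsWithX (h1 : len 1 = 0) {z : AltWord G} (hz : z.EndsWithX) :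
    z.flip.weight len + 1 = z.weight len := by
  obtain ⟨u, _ | ⟨v, l⟩, h⟩ := z
  · simp [EndsWithX] at hz
  · obtain rfl : u = 1 := hz.1
    simp [flip, weight, h1]
    ring

lemma weight_flip_of_not_endsWithX (h1 : len 1 = 0) {z : AltWord G} (hz : ¬ z.EndsWithX) :
    z.flip.weight len = z.weight len + 1 := by
  simpa using
    (weight_flip_of_endsWithX len h1 ((endsWithX_flip_iff z).2 hz)).symm

lemma weight_mulRight_le (hlen : ∀ a b, len (a * b) ≤ len a + len b) (g : G) (z : AltWord G) :
    (mulRight g z).weight len ≤ z.weight len + len g := by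
  have := hlen z.last g
  simp only [weight, mulRight_apply]
  omega

lemma weight_mulRight_of_endsWithX (h1 : len 1 = 0) (g : G) {z : AltWord G} (hz : z.EndsWithX) :
    (mulRight g z).weight len = z.weight len + len g := by
  simp only [weight, mulRight_apply, hz.1, one_mul, h1]
  omega

lemma len_eval_le (hlen : ∀ a b, len (a * b) ≤ len a + len b) (h1 : len 1 = 0) {x : G}
    (hx : len x ≤ 1) (z : AltWord G) : len (z.eval x) ≤ z.weight len := by
  suffices ∀ l : List G, len (l.reverse.map (· * x)).prod ≤ (l.map (len · + 1)).sum from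
    (hlen _ _).trans (by have := this z.syllables; simp only [weight]; omega)
  intro l
  induction l with
  | nil => simp [h1]
  | cons v l ih =>
    have := hlen ((l.reverse.map (· * x)).prod) (v * x)
    have := hlen v x
    simp only [List.reverse_cons, List.map_append, List.prod_append, List.map_cons,
      List.map_nil, List.prod_cons, List.prod_nil, mul_one, List.sum_cons]
    omega

end AltWord

namespace CoxeterSystem

variable {B W : Type*} [Group W] {M : CoxeterMatrix B} (cs : CoxeterSystem M W)

theorem isOfFinOrder_simple_mul_simple {i i' : B} (h : M i i' ≠ 0) :
    IsOfFinOrder (cs.simple i * cs.simple i') :=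
  isOfFinOrder_iff_pow_eq_one.2 ⟨_, Nat.pos_of_ne_zero h, cs.simple_mul_simple_pow i i'⟩

theorem le_length_of_mul_simple_le {f : W → ℕ} (h1 : f 1 = 0)
    (hf : ∀ w i, f (w * cs.simple i) ≤ f w + 1) (w : W) : f w ≤ cs.length w := by
  induction h : cs.length w generalizing w with
  | zero => rw [cs.length_eq_zero_iff.1 h, h1]
  | succ n ih =>
    obtain ⟨i, hi⟩ := cs.exists_rightDescent_of_ne_one (w := w) (by rintro rfl; simp at h)
    have hlen : cs.length (w * cs.simple i) = n := by
      rcases cs.length_mul_simple w i with h' | h' <;> unfold IsRightDescent at hi <;> omega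
    simpa using hf (w * cs.simple i) i |>.trans (Nat.add_le_add_right (ih _ hlen) 1)

open AltWord

variable {s₀ : B}

open scoped Classical in
noncomputable def altWordGen (s₀ i : B) : Equiv.Perm (AltWord W) :=
  if i = s₀ then flipPerm else mulRight (cs.simple i)

lemma isLiftable_altWordGen (hM : ∀ i, i ≠ s₀ → M s₀ i = 0) :
    M.IsLiftable (cs.altWordGen s₀) := by
  intro i i'
  by_cases hi : i = s₀ <;> by_cases hi' : i' = s₀
  · subst hi hi'
    ext1 z
    simp [altWordGen]
  · rw [hi, hM i' hi', pow_zero]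
  · rw [hi', M.symmetric, hM i hi, pow_zero]
  · rw [altWordGen, if_neg hi, altWordGen, if_neg hi', mulRight_mul_mulRight, mulRight_pow,
      M.symmetric, cs.simple_mul_simple_pow]
    ext z <;> simp

noncomputable def altWordAction (hM : ∀ i, i ≠ s₀ → M s₀ i = 0) : W →* Equiv.Perm (AltWord W) :=
  cs.lift ⟨cs.altWordGen s₀, cs.isLiftable_altWordGen hM⟩

/-- The inverse turns the left action into reading `w` from left to right. -/
noncomputable def altWord (hM : ∀ i, i ≠ s₀ → M s₀ i = 0) (w : W) : AltWord W :=
  cs.altWordAction hM w⁻¹ nil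

variable (hM : ∀ i, i ≠ s₀ → M s₀ i = 0)

lemma altWord_one : cs.altWord hM 1 = nil := by
  simp [altWord]

lemma altWord_mul_simple_self (w : W) :
    cs.altWord hM (w * cs.simple s₀) = (cs.altWord hM w).flip := by
  simp [altWord, altWordAction, altWordGen]

lemma altWord_mul_simple_of_ne {i : B} (hi : i ≠ s₀) (w : W) :
    cs.altWord hM (w * cs.simple i) = mulRight (cs.simple i) (cs.altWord hM w) := by
  simp only [altWord, altWordAction, mul_inv_rev, inv_simple, map_mul, Equiv.Perm.mul_apply,
    lift_apply_simple, altWordGen, if_neg hi]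

lemma eval_altWord (w : W) : (cs.altWord hM w).eval (cs.simple s₀) = w := by
  induction w using cs.simple_induction_right with
  | one => rw [altWord_one, eval_nil]
  | mul_simple_right w i ih =>
    by_cases hi : i = s₀
    · subst hi
      rw [altWord_mul_simple_self, eval_flip (cs.simple_mul_simple_self _), ih]
    · rw [altWord_mul_simple_of_ne _ hM hi, eval_mulRight, ih]

lemma length_eq_weight_altWord (w : W) : cs.length w = (cs.altWord hM w).weight cs.length := by
  apply le_antisymm
  · conv_lhs => rw [← cs.eval_altWord hM w]
    exact len_eval_le _ cs.length_mul_le (by simp) (by simp) _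
  · refine cs.le_length_of_mul_simple_le (f := fun w => (cs.altWord hM w).weight cs.length)
      (by simp [altWord_one, nil, weight]) (fun w i => ?_) w
    by_cases hi : i = s₀
    · subst hi
      by_cases h : (cs.altWord hM w).EndsWithX
      · have := weight_flip_of_endsWithX cs.length (by simp) h
        simp only [altWord_mul_simple_self]
        omega
      · rw [altWord_mul_simple_self, weight_flip_of_not_endsWithX cs.length (by simp) h]
    · simpa [altWord_mul_simple_of_ne _ hM hi] using
        weight_mulRight_le _ cs.length_mul_le (cs.simple i) (cs.altWord hM w)

theorem setOf_isRightDescent_eq_singleton {v : W} (hv : (cs.altWord hM v).EndsWithX) :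
    {i | cs.IsRightDescent v i} = {s₀} := by
  ext i
  simp only [Set.mem_ofPred_eq, Set.mem_singleton_iff, IsRightDescent]
  by_cases hi : i = s₀
  · subst hi
    refine iff_of_true ?_ rfl
    have := weight_flip_of_endsWithX cs.length (by simp) hv
    rw [cs.length_eq_weight_altWord hM, cs.length_eq_weight_altWord hM v,
      altWord_mul_simple_self]
    omega
  · rw [cs.length_eq_weight_altWord hM, cs.length_eq_weight_altWord hM v,
      altWord_mul_simple_of_ne _ hM hi, weight_mulRight_of_endsWithX _ (by simp) _ hv]
    simp [hi]

lemma endsWithX_altWord_or (w : W) :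
    (cs.altWord hM w).EndsWithX ∨ (cs.altWord hM (w * cs.simple s₀)).EndsWithX := by
  rw [altWord_mul_simple_self, endsWithX_flip_iff]
  exact em _

end CoxeterSystem

theorem quasiDense_of_all_infinite_order_general {B W : Type*} [Group W]
    {M : CoxeterMatrix B} (cs : CoxeterSystem M W)
    (s₀ : B) (hs₀ : ∀ s : B, s ≠ s₀ → ¬ IsOfFinOrder (cs.simple s₀ * cs.simple s)) :
    ∃ N : ℕ, 0 < N ∧ ∀ w : W, ∃ v : W,
      {s : B | cs.IsRightDescent v s} = {s₀} ∧ cs.length (w⁻¹ * v) ≤ N := by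
  have hM : ∀ i, i ≠ s₀ → M s₀ i = 0 := fun i hi => by
    by_contra h
    exact hs₀ i hi (cs.isOfFinOrder_simple_mul_simple h)
  refine ⟨1, one_pos, fun w => ?_⟩
  rcases cs.endsWithX_altWord_or hM w with h | h
  · exact ⟨w, cs.setOf_isRightDescent_eq_singleton hM h, by simp⟩
  · exact ⟨w * cs.simple s₀, cs.setOf_isRightDescent_eq_singleton hM h, by simp [cs.length_simple]⟩

/-- Let `(W,S)` be a right-angled Coxeter system and let `s₀ ∈ S` be such
that `o(s₀ s) = ∞` for every `s ∈ S \ {s₀}`. Then `W^{{s₀}} = {w ∈ W : S(w) = {s₀}}` is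
quasi-dense in `W` with respect to the word metric. -/
theorem quasiDense_of_all_infinite_order {B W : Type*} [Finite B] [Group W]
    {M : CoxeterMatrix B} (cs : CoxeterSystem M W)
    (hra : ∀ s t : B, s ≠ t → M s t = 2 ∨ M s t = 0)
    (s₀ : B) (hs₀ : ∀ s : B, s ≠ s₀ → ¬ IsOfFinOrder (cs.simple s₀ * cs.simple s)) :
    ∃ N : ℕ, 0 < N ∧ ∀ w : W, ∃ v : W,
      {s : B | cs.IsRightDescent v s} = {s₀} ∧ cs.length (w⁻¹ * v) ≤ N :=
  quasiDense_of_all_infinite_order_general cs s₀ hs₀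
end
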